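/- Fix I_0 > 0 with I_0 ≤ I_max. If q* maximizes −I(Y;Y_N) over the set of quantizers q satisfying I(X;Y_N)(q) ≥ I_0, then I(X;Y_N)(q*) = I_0 (the constraint is active). -/

import Mathlib

open Real

/-- Marginal of X from the joint distribution P(x,y). -/
noncomputable def pX {Kx K : ℕ} (P : Fin Kx → Fin K → ℝ) (x : Fin Kx) : ℝ :=
  ∑ k, P x k

/-- Marginal of Y from the joint distribution P(x,y). -/
noncomputable def pY {Kx K : ℕ} (P : Fin Kx → Fin K → ℝ) (k : Fin K) : ℝ :=
  ∑ x, P x k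

/-- Joint distribution of (X, Y_N) induced by the quantizer q. -/
noncomputable def pXN {Kx K N : ℕ} (P : Fin Kx → Fin K → ℝ)
    (q : Fin N → Fin K → ℝ) (x : Fin Kx) (ν : Fin N) : ℝ :=
  ∑ k, P x k * q ν k

/-- Marginal of Y_N induced by the quantizer q and a distribution p on Y. -/
noncomputable def pN {K N : ℕ} (p : Fin K → ℝ) (q : Fin N → Fin K → ℝ) (ν : Fin N) : ℝ :=
  ∑ k, p k * q ν k

/-- Conditional entropy H(Y_N|Y). -/
noncomputable def Hcond {K N : ℕ} (p : Fin K → ℝ) (q : Fin N → Fin K → ℝ) : ℝ :=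
  -∑ k, p k * ∑ ν, q ν k * Real.log (q ν k)

/-- Mutual information I(Y;Y_N) induced by the quantizer q. -/
noncomputable def IYN {K N : ℕ} (p : Fin K → ℝ) (q : Fin N → Fin K → ℝ) : ℝ :=
  ∑ ν, ∑ k, q ν k * p k * Real.log (q ν k / pN p q ν)

/-- Mutual information I(X;Y_N) induced by the quantizer q through X → Y → Y_N. -/
noncomputable def IXN {Kx K N : ℕ} (P : Fin Kx → Fin K → ℝ)
    (q : Fin N → Fin K → ℝ) : ℝ :=
  ∑ x, ∑ ν, pXN P q x ν * Real.log (pXN P q x ν / (pX P x * pN (pY P) q ν))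

/-- Mutual information I(X;Y). -/
noncomputable def IXY {Kx K : ℕ} (P : Fin Kx → Fin K → ℝ) : ℝ :=
  ∑ x, ∑ k, P x k * Real.log (P x k / (pX P x * pY P k))

/-- The set Δ of stochastic quantizers. -/
def Δset (N K : ℕ) : Set (Fin N → Fin K → ℝ) :=
  {q | (∀ ν k, 0 ≤ q ν k) ∧ ∀ k, ∑ ν, q ν k = 1}

/-- The (ambient-coordinate) gradient of I(X;Y_N): ∂I/∂q_{νk} = ∑_x p(x,y_k) ln(p(x|ν)/p(x)). -/
noncomputable def gradI {Kx K N : ℕ} (P : Fin Kx → Fin K → ℝ)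
    (q : Fin N → Fin K → ℝ) (ν : Fin N) (k : Fin K) : ℝ :=
  ∑ x, P x k * Real.log ((pXN P q x ν / pN (pY P) q ν) / pX P x)

/-! If the constraint were inactive at `q*`, continuity of `I(X;Y_N)` would let `q*` move a
little towards the uninformative quantizer `U ν k = p(ν)` without leaving the feasible set. As
`I(Y;Y_N)` is convex and vanishes at `U`, maximality of `-I(Y;Y_N)` at `q*` then forces
`I(Y;Y_N)(q*) = 0`; by Gibbs' inequality `q*` is itself uninformative, so `I(X;Y_N)(q*) = 0 < I₀`. -/

open Finset InformationTheory

section Quantizer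

variable {K N : ℕ} {p : Fin K → ℝ} {q q₀ q₁ : Fin N → Fin K → ℝ}

lemma convex_Δset : Convex ℝ (Δset N K) := by
  rintro q₀ ⟨hq₀, hs₀⟩ q₁ ⟨hq₁, hs₁⟩ a b ha hb hab
  refine ⟨fun ν k => ?_, fun k => ?_⟩
  · simp only [Pi.add_apply, Pi.smul_apply, smul_eq_mul]
    exact add_nonneg (mul_nonneg ha (hq₀ ν k)) (mul_nonneg hb (hq₁ ν k))
  · simp only [Pi.add_apply, Pi.smul_apply, smul_eq_mul, sum_add_distrib, ← mul_sum, hs₀, hs₁]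
    linarith

lemma pN_nonneg (hp : ∀ k, 0 ≤ p k) (hq : ∀ ν k, 0 ≤ q ν k) (ν : Fin N) : 0 ≤ pN p q ν :=
  sum_nonneg fun k _ => mul_nonneg (hp k) (hq ν k)

lemma eq_zero_of_pN_eq_zero (hp : ∀ k, 0 < p k) (hq : ∀ ν k, 0 ≤ q ν k) {ν : Fin N}
    (h : pN p q ν = 0) (k : Fin K) : q ν k = 0 := by
  have := (sum_eq_zero_iff_of_nonneg fun k _ => mul_nonneg (hp k).le (hq ν k)).mp h k (mem_univ k)
  exact (mul_eq_zero.mp this).resolve_left (hp k).ne'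

lemma sum_pN (hq : ∀ k, ∑ ν, q ν k = 1) : ∑ ν, pN p q ν = ∑ k, p k := by
  simp only [pN]
  rw [sum_comm]
  simp only [← mul_sum, hq, mul_one]

lemma pN_smul_add_smul (a b : ℝ) (ν : Fin N) :
    pN p (a • q₀ + b • q₁) ν = a * pN p q₀ ν + b * pN p q₁ ν := by
  simp only [pN, Pi.add_apply, Pi.smul_apply, smul_eq_mul, mul_sum, ← sum_add_distrib]
  exact sum_congr rfl fun k _ => by ring

lemma pN_const (r : Fin N → ℝ) (ν : Fin N) :
    pN p (fun ν _ => r ν) ν = (∑ k, p k) * r ν := by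
  simp only [pN, sum_mul]

end Quantizer

lemma add_mul_log_div_add_le {x y u v : ℝ} (hx : 0 ≤ x) (hy : 0 ≤ y) (hu : 0 ≤ u) (hv : 0 ≤ v)
    (hxu : u = 0 → x = 0) (hyv : v = 0 → y = 0) :
    (x + y) * log ((x + y) / (u + v)) ≤ x * log (x / u) + y * log (y / v) := by
  rcases hu.eq_or_lt with rfl | hu
  · simp [hxu rfl]
  rcases hv.eq_or_lt with rfl | hv
  · simp [hyv rfl]
  -- convexity of `t ↦ t log t` at the point `(x + y)/(u + v)`, a convex combination of `x/u`, `y/v`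
  have key := convexOn_mul_log.2 (Set.mem_Ici.mpr (div_nonneg hx hu.le))
    (Set.mem_Ici.mpr (div_nonneg hy hv.le)) (div_nonneg hu.le (add_pos hu hv).le)
    (div_nonneg hv.le (add_pos hu hv).le) (by field_simp)
  simp only [smul_eq_mul] at key
  have hcomb : u / (u + v) * (x / u) + v / (u + v) * (y / v) = (x + y) / (u + v) := by
    field_simp
  rw [hcomb] at key
  have := mul_le_mul_of_nonneg_left key (add_pos hu hv).le
  calc (x + y) * log ((x + y) / (u + v))
      = (u + v) * ((x + y) / (u + v) * log ((x + y) / (u + v))) := by field_simp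
    _ ≤ _ := this
    _ = x * log (x / u) + y * log (y / v) := by field_simp

lemma mul_mul_log_div_mul (a Q M : ℝ) :
    a * Q * log (a * Q / (a * M)) = a * (Q * log (Q / M)) := by
  rcases eq_or_ne a 0 with rfl | ha
  · simp
  · rw [mul_div_mul_left Q M ha, mul_assoc]

lemma mul_log_div_convex {a b Q₀ Q₁ M₀ M₁ : ℝ} (ha : 0 ≤ a) (hb : 0 ≤ b)
    (hQ₀ : 0 ≤ Q₀) (hQ₁ : 0 ≤ Q₁) (hM₀ : 0 ≤ M₀) (hM₁ : 0 ≤ M₁)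
    (h₀ : M₀ = 0 → Q₀ = 0) (h₁ : M₁ = 0 → Q₁ = 0) :
    (a * Q₀ + b * Q₁) * log ((a * Q₀ + b * Q₁) / (a * M₀ + b * M₁)) ≤
      a * (Q₀ * log (Q₀ / M₀)) + b * (Q₁ * log (Q₁ / M₁)) := by
  rw [← mul_mul_log_div_mul a, ← mul_mul_log_div_mul b]
  refine add_mul_log_div_add_le (mul_nonneg ha hQ₀) (mul_nonneg hb hQ₁) (mul_nonneg ha hM₀)
    (mul_nonneg hb hM₁) (fun h => ?_) (fun h => ?_)
  · rcases mul_eq_zero.mp h with h | h <;> simp [h, h₀]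
  · rcases mul_eq_zero.mp h with h | h <;> simp [h, h₁]

lemma mul_log_div_eq_klFun {Q M : ℝ} (h : M = 0 → Q = 0) :
    Q * log (Q / M) = M * klFun (Q / M) + Q - M := by
  rcases eq_or_ne M 0 with rfl | hM
  · simp [h rfl]
  · rw [klFun_apply]
    field_simp
    ring

section MutualInformation

variable {K N : ℕ} {p : Fin K → ℝ} {q : Fin N → Fin K → ℝ}

lemma IYN_eq_sum_klFun (hp : ∀ k, 0 < p k) (hp₁ : ∑ k, p k = 1) (hq : q ∈ Δset N K) :
    IYN p q = ∑ ν, ∑ k, p k * (pN p q ν * klFun (q ν k / pN p q ν)) := by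
  have hterm : ∀ ν k, q ν k * p k * log (q ν k / pN p q ν) =
      p k * (pN p q ν * klFun (q ν k / pN p q ν)) + (p k * q ν k - p k * pN p q ν) :=
    fun ν k => by
      rw [mul_comm (q ν k), mul_assoc,
        mul_log_div_eq_klFun fun h => eq_zero_of_pN_eq_zero hp hq.1 h k]
      ring
  have hsum : ∀ ν, ∑ k, (p k * q ν k - p k * pN p q ν) = 0 := fun ν => by
    rw [sum_sub_distrib, ← sum_mul, hp₁, one_mul]
    exact sub_self _
  simp only [IYN, hterm, sum_add_distrib, hsum, add_zero]

lemma IYN_nonneg (hp : ∀ k, 0 < p k) (hp₁ : ∑ k, p k = 1) (hq : q ∈ Δset N K) :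
    0 ≤ IYN p q := by
  rw [IYN_eq_sum_klFun hp hp₁ hq]
  have hpN := pN_nonneg (fun k => (hp k).le) hq.1
  exact sum_nonneg fun ν _ => sum_nonneg fun k _ => mul_nonneg (hp k).le <|
    mul_nonneg (hpN ν) (klFun_nonneg (div_nonneg (hq.1 ν k) (hpN ν)))

lemma eq_pN_of_IYN_eq_zero (hp : ∀ k, 0 < p k) (hp₁ : ∑ k, p k = 1) (hq : q ∈ Δset N K)
    (h : IYN p q = 0) : q = fun ν _ => pN p q ν := by
  have hpN := pN_nonneg (fun k => (hp k).le) hq.1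
  have hklFun : ∀ ν k, 0 ≤ klFun (q ν k / pN p q ν) :=
    fun ν k => klFun_nonneg (div_nonneg (hq.1 ν k) (hpN ν))
  rw [IYN_eq_sum_klFun hp hp₁ hq, sum_eq_zero_iff_of_nonneg fun ν _ => sum_nonneg fun k _ =>
    mul_nonneg (hp k).le (mul_nonneg (hpN ν) (hklFun ν k))] at h
  funext ν k
  have hνk := (sum_eq_zero_iff_of_nonneg fun k _ => mul_nonneg (hp k).le
    (mul_nonneg (hpN ν) (hklFun ν k))).mp (h ν (mem_univ ν)) k (mem_univ k)
  rcases mul_eq_zero.mp ((mul_eq_zero.mp hνk).resolve_left (hp k).ne') with h0 | h0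
  · rw [h0, eq_zero_of_pN_eq_zero hp hq.1 h0 k]
  · have hM : pN p q ν ≠ 0 := fun hM => by simp [hM, klFun_zero] at h0
    rwa [klFun_eq_zero_iff (div_nonneg (hq.1 ν k) (hpN ν)), div_eq_one_iff_eq hM] at h0

lemma convexOn_IYN (hp : ∀ k, 0 < p k) : ConvexOn ℝ (Δset N K) (IYN p) := by
  refine ⟨convex_Δset, fun q₀ hq₀ q₁ hq₁ a b ha hb _ => ?_⟩
  have hpN₀ := pN_nonneg (fun k => (hp k).le) hq₀.1
  have hpN₁ := pN_nonneg (fun k => (hp k).le) hq₁.1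
  simp only [IYN, pN_smul_add_smul, smul_eq_mul, mul_sum, ← sum_add_distrib]
  refine sum_le_sum fun ν _ => sum_le_sum fun k _ => ?_
  simp only [Pi.add_apply, Pi.smul_apply, smul_eq_mul]
  have := mul_le_mul_of_nonneg_left (mul_log_div_convex ha hb (hq₀.1 ν k) (hq₁.1 ν k)
    (hpN₀ ν) (hpN₁ ν) (fun h => eq_zero_of_pN_eq_zero hp hq₀.1 h k)
    (fun h => eq_zero_of_pN_eq_zero hp hq₁.1 h k)) (hp k).le
  linarith

lemma IYN_const (hp₁ : ∑ k, p k = 1) (r : Fin N → ℝ) : IYN p (fun ν _ => r ν) = 0 := by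
  simp [IYN, pN_const, hp₁]

end MutualInformation

section ChannelInformation

variable {Kx K N : ℕ} {P : Fin Kx → Fin K → ℝ} {q : Fin N → Fin K → ℝ}

lemma sum_pY (P : Fin Kx → Fin K → ℝ) : ∑ k, pY P k = ∑ x, ∑ k, P x k :=
  sum_comm

lemma sum_pXN (q : Fin N → Fin K → ℝ) (ν : Fin N) : ∑ x, pXN P q x ν = pN (pY P) q ν := by
  simp only [pXN, pN, pY, sum_mul]
  exact sum_comm

lemma pXN_le_pN (hP : ∀ x k, 0 ≤ P x k) (hq : ∀ ν k, 0 ≤ q ν k) (x : Fin Kx) (ν : Fin N) :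
    pXN P q x ν ≤ pN (pY P) q ν :=
  sum_pXN (P := P) q ν ▸ single_le_sum (fun x _ => sum_nonneg fun k _ =>
    mul_nonneg (hP x k) (hq ν k)) (mem_univ x)

lemma mul_log_div_mul_eq {A B C : ℝ} (hB : B ≠ 0) (hC : C = 0 → A = 0) :
    A * log (A / (B * C)) = A * log A - A * log B - A * log C := by
  rcases eq_or_ne A 0 with rfl | hA
  · simp
  · have hC : C ≠ 0 := mt hC hA
    rw [log_div hA (mul_ne_zero hB hC), log_mul hB hC]
    ring

/-- Unlike the definition, this expression is visibly continuous in `q`, also where `p(ν) = 0`. -/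
lemma IXN_eq_of_nonneg (hP : ∀ x k, 0 ≤ P x k) (hpX : ∀ x, 0 < pX P x)
    (hq : ∀ ν k, 0 ≤ q ν k) :
    IXN P q = ∑ x, ∑ ν, (pXN P q x ν * log (pXN P q x ν) - pXN P q x ν * log (pX P x)) -
      ∑ ν, pN (pY P) q ν * log (pN (pY P) q ν) := by
  have hzero : ∀ x ν, pN (pY P) q ν = 0 → pXN P q x ν = 0 := fun x ν h =>
    le_antisymm (h ▸ pXN_le_pN hP hq x ν) (sum_nonneg fun k _ => mul_nonneg (hP x k) (hq ν k))
  simp only [IXN, mul_log_div_mul_eq (hpX _).ne' (hzero _ _), sum_sub_distrib]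
  rw [sum_comm (f := fun x ν => pXN P q x ν * log (pN (pY P) q ν))]
  simp only [← sum_mul, sum_pXN]

lemma continuousOn_IXN (hP : ∀ x k, 0 ≤ P x k) (hpX : ∀ x, 0 < pX P x) :
    ContinuousOn (IXN P : (Fin N → Fin K → ℝ) → ℝ) {q | ∀ ν k, 0 ≤ q ν k} := by
  refine ContinuousOn.congr (Continuous.continuousOn ?_)
    fun q hq => IXN_eq_of_nonneg hP hpX hq
  have hpXN : ∀ x ν, Continuous fun q : Fin N → Fin K → ℝ => pXN P q x ν :=
    fun x ν => by unfold pXN; fun_prop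
  have hpN : ∀ ν, Continuous fun q : Fin N → Fin K → ℝ => pN (pY P) q ν :=
    fun ν => by unfold pN; fun_prop
  refine .sub (continuous_finsetSum _ fun x _ => continuous_finsetSum _ fun ν _ =>
    .sub (continuous_mul_log.comp (hpXN x ν)) ((hpXN x ν).mul continuous_const))
    (continuous_finsetSum _ fun ν _ => continuous_mul_log.comp (hpN ν))

lemma IXN_const (hPsum : ∑ x, ∑ k, P x k = 1) (r : Fin N → ℝ) :
    IXN P (fun ν _ => r ν) = 0 := by
  have hpXN : ∀ x ν, pXN P (fun ν _ => r ν) x ν = pX P x * r ν := fun x ν => by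
    simp only [pXN, pX, sum_mul]
  simp only [IXN, hpXN, pN_const, sum_pY, hPsum, one_mul]
  exact sum_eq_zero fun x _ => sum_eq_zero fun ν _ => by
    rcases eq_or_ne (pX P x * r ν) 0 with h | h <;> simp [h]

lemma exists_segment_IXN_gt (hP : ∀ x k, 0 ≤ P x k) (hpX : ∀ x, 0 < pX P x)
    {q₀ q₁ : Fin N → Fin K → ℝ} (hq₀ : q₀ ∈ Δset N K) (hq₁ : q₁ ∈ Δset N K) {c : ℝ}
    (hc : c < IXN P q₀) : ∃ t ∈ Set.Ioo (0 : ℝ) 1, c < IXN P ((1 - t) • q₀ + t • q₁) := by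
  have hcont : ContinuousOn (fun t : ℝ => IXN P ((1 - t) • q₀ + t • q₁)) (Set.Icc 0 1) :=
    (continuousOn_IXN hP hpX).comp (by fun_prop) fun t ht =>
      (convex_Δset hq₀ hq₁ (sub_nonneg.2 ht.2) ht.1 (sub_add_cancel 1 t)).1
  have hc' : c < IXN P ((1 - 0 : ℝ) • q₀ + (0 : ℝ) • q₁) := by simpa using hc
  have hev := ((hcont 0 (Set.left_mem_Icc.2 zero_le_one)).mono Set.Ioo_subset_Icc_self).eventually
    (lt_mem_nhds hc')
  rw [nhdsWithin_Ioo_eq_nhdsGT zero_lt_one] at hev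
  exact (hev.and (Ioo_mem_nhdsGT zero_lt_one)).exists.imp fun t ht => ⟨ht.2, ht.1⟩

end ChannelInformation

theorem stmt3_general {Kx K N : ℕ} (P : Fin Kx → Fin K → ℝ) (hP : ∀ x k, 0 ≤ P x k)
    (hPsum : ∑ x, ∑ k, P x k = 1) (hpY : ∀ k, 0 < pY P k) (hpX : ∀ x, 0 < pX P x)
    (I0 : ℝ) (hI0 : 0 < I0)
    (qs : Fin N → Fin K → ℝ) (hqs : qs ∈ Δset N K) (hfeas : I0 ≤ IXN P qs)
    (hmax : ∀ q ∈ Δset N K, I0 ≤ IXN P q → -(IYN (pY P) q) ≤ -(IYN (pY P) qs)) :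
    IXN P qs = I0 := by
  by_contra hne
  have hpY₁ : ∑ k, pY P k = 1 := (sum_pY P).trans hPsum
  set U : Fin N → Fin K → ℝ := fun ν _ => pN (pY P) qs ν
  have hU : U ∈ Δset N K :=
    ⟨fun ν _ => pN_nonneg (fun k => (hpY k).le) hqs.1 ν, fun _ => (sum_pN hqs.2).trans hpY₁⟩
  obtain ⟨t, ht, hIt⟩ := exists_segment_IXN_gt hP hpX hqs hU (hfeas.lt_of_ne (Ne.symm hne))
  have hle : IYN (pY P) qs ≤ (1 - t) * IYN (pY P) qs := by
    have hconv := (convexOn_IYN hpY).2 hqs hU (sub_nonneg.2 ht.2.le) ht.1.le (sub_add_cancel 1 t)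
    rw [IYN_const hpY₁, smul_zero, add_zero, smul_eq_mul] at hconv
    linarith [hmax _ (convex_Δset hqs hU (sub_nonneg.2 ht.2.le) ht.1.le (sub_add_cancel 1 t))
      hIt.le]
  have hIYN : IYN (pY P) qs = 0 := le_antisymm (by nlinarith [ht.1]) (IYN_nonneg hpY hpY₁ hqs)
  have hIXN := IXN_const hPsum (pN (pY P) qs)
  rw [← eq_pN_of_IYN_eq_zero hpY hpY₁ hqs hIYN] at hIXN
  linarith

theorem stmt3 {Kx K N : ℕ} (P : Fin Kx → Fin K → ℝ) (hP : ∀ x k, 0 ≤ P x k)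
    (hPsum : ∑ x, ∑ k, P x k = 1) (hpY : ∀ k, 0 < pY P k) (hpX : ∀ x, 0 < pX P x)
    (I0 : ℝ) (hI0 : 0 < I0)
    (hImax : ∃ q ∈ Δset N K, I0 ≤ IXN P q)
    (qs : Fin N → Fin K → ℝ) (hqs : qs ∈ Δset N K) (hfeas : I0 ≤ IXN P qs)
    (hmax : ∀ q ∈ Δset N K, I0 ≤ IXN P q → -(IYN (pY P) q) ≤ -(IYN (pY P) qs)) :
    IXN P qs = I0 :=
  stmt3_general P hP hPsum hpY hpX I0 hI0 qs hqs hfeas hmax
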